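/- Let 0 < α < 1. There exists a constant C > 0, depending only on α, with the following property. Let v : ℝ → ℝ be four times continuously differentiable and suppose the fourth derivative v⁽⁴⁾ is α-Hölder continuous with constant M, i.e., |v⁽⁴⁾(s) − v⁽⁴⁾(t)| ≤ M |s − t|^α for all s, t ∈ ℝ. For h > 0 define the error function E_h(z) = v''(z) − (v(z+h) − 2v(z) + v(z−h))/h². Then for every h > 0 and all x, y ∈ ℝ with |x − y| ≥ h, |E_h(x) − E_h(y)| ≤ C h² M |x − y|^α. -/

import Mathlib

/-!
Taylor expansion to fourth order around `z` in both directions gives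
`E_h(z) = -(v⁽⁴⁾(a) + v⁽⁴⁾(b)) h² / 24` for some `a, b` within `h` of `z`. Subtracting the same
identity at `y`, the intermediate points for `x` and for `y` are at distance at most
`|x - y| + 2h ≤ 3 |x - y|`, so the Hölder bound yields the estimate with `C = 3 ^ α / 12`.
-/

/-- The error of the central second difference quotient with step `h` for `v` at `z`. -/
noncomputable def sdErr (h : ℝ) (v : ℝ → ℝ) (z : ℝ) : ℝ :=
  deriv (deriv v) z - (v (z + h) - 2 * v z + v (z - h)) / h ^ 2

open Set Finset Nat

theorem exists_taylor_lagrange_of_contDiff {f : ℝ → ℝ} {n : ℕ} (hf : ContDiff ℝ (n + 1) f)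
    {x₀ x : ℝ} (hx : x₀ ≠ x) :
    ∃ c, |c - x₀| ≤ |x - x₀| ∧ f x = ∑ k ∈ range (n + 1), iteratedDeriv k f x₀ * (x - x₀) ^ k / k !
      + iteratedDeriv (n + 1) f c * (x - x₀) ^ (n + 1) / (n + 1)! := by
  obtain ⟨c, hc, hrem⟩ := taylor_mean_remainder_lagrange_iteratedDeriv hx hf.contDiffOn
  refine ⟨c, abs_sub_left_of_mem_uIcc (uIoo_subset_uIcc_self hc), ?_⟩
  have hpoly : taylorWithinEval f n (uIcc x₀ x) x₀ x
      = ∑ k ∈ range (n + 1), iteratedDeriv k f x₀ * (x - x₀) ^ k / k ! := by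
    rw [taylor_within_apply]
    refine Finset.sum_congr rfl fun k hk => ?_
    have hk : (k : WithTop ℕ∞) ≤ n + 1 := by
      norm_cast; have := Finset.mem_range.mp hk; omega
    rw [iteratedDerivWithin_eq_iteratedDeriv (uniqueDiffOn_uIcc hx) ((hf.of_le hk).contDiffAt)
      left_mem_uIcc, smul_eq_mul]
    ring
  rw [← hpoly]
  linarith

theorem sdErr_eq_of_contDiff {v : ℝ → ℝ} (hv : ContDiff ℝ 4 v) {h : ℝ} (hh : h ≠ 0) (z : ℝ) :
    ∃ a b, |a - z| ≤ |h| ∧ |b - z| ≤ |h| ∧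
      sdErr h v z = -(iteratedDeriv 4 v a + iteratedDeriv 4 v b) * h ^ 2 / 24 := by
  obtain ⟨a, ha, hva⟩ := exists_taylor_lagrange_of_contDiff (n := 3) hv (x₀ := z) (x := z + h)
    (fun e => hh (by linarith))
  obtain ⟨b, hb, hvb⟩ := exists_taylor_lagrange_of_contDiff (n := 3) hv (x₀ := z) (x := z - h)
    (fun e => hh (by linarith))
  refine ⟨a, b, by simpa using ha, by simpa [abs_neg] using hb, ?_⟩
  have hd2 : deriv (deriv v) z = iteratedDeriv 2 v z := by
    rw [iteratedDeriv_succ, iteratedDeriv_one]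
  simp only [Finset.sum_range_succ, Finset.sum_range_zero, iteratedDeriv_zero] at hva hvb
  rw [sdErr, hd2, hva, hvb]
  simp only [factorial, add_sub_cancel_left, sub_sub_cancel_left]
  field_simp
  ring

theorem abs_sub_le_three_rpow_mul_of_holder {f : ℝ → ℝ} {M α : ℝ} (hα : 0 ≤ α)
    (hf : ∀ s t, |f s - f t| ≤ M * |s - t| ^ α) {p q x y r : ℝ} (hp : |p - x| ≤ r)
    (hq : |q - y| ≤ r) (hr : r ≤ |x - y|) :
    |f p - f q| ≤ 3 ^ α * M * |x - y| ^ α := by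
  have hM : 0 ≤ M := by simpa using (abs_nonneg _).trans (hf 1 0)
  have hpq : |p - q| ≤ 3 * |x - y| :=
    calc |p - q| = |(p - x) + (x - y) - (q - y)| := by ring_nf
      _ ≤ |p - x| + |x - y| + |q - y| := (abs_sub _ _).trans (add_le_add_left (abs_add_le _ _) _)
      _ ≤ 3 * |x - y| := by linarith
  calc |f p - f q| ≤ M * |p - q| ^ α := hf p q
    _ ≤ M * (3 * |x - y|) ^ α := by gcongr
    _ = 3 ^ α * M * |x - y| ^ α := by
      rw [Real.mul_rpow (by norm_num) (abs_nonneg _)]; ring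

theorem stmt14_general (α : ℝ) (hα0 : 0 < α) :
    ∃ C > 0, ∀ (v : ℝ → ℝ) (M : ℝ), ContDiff ℝ 4 v →
      (∀ s t : ℝ, |iteratedDeriv 4 v s - iteratedDeriv 4 v t| ≤ M * |s - t| ^ α) →
      ∀ h : ℝ, 0 < h → ∀ x y : ℝ, h ≤ |x - y| →
        |sdErr h v x - sdErr h v y| ≤ C * h ^ 2 * M * |x - y| ^ α := by
  refine ⟨3 ^ α / 12, by positivity, fun v M hv hM h hh x y hxy => ?_⟩
  set f := iteratedDeriv 4 v
  obtain ⟨a₁, b₁, ha₁, hb₁, hx⟩ := sdErr_eq_of_contDiff hv hh.ne' x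
  obtain ⟨a₂, b₂, ha₂, hb₂, hy⟩ := sdErr_eq_of_contDiff hv hh.ne' y
  rw [abs_of_pos hh] at ha₁ hb₁ ha₂ hb₂
  have hfa := abs_sub_le_three_rpow_mul_of_holder hα0.le hM ha₁ ha₂ hxy
  have hfb := abs_sub_le_three_rpow_mul_of_holder hα0.le hM hb₁ hb₂ hxy
  have hdiff : sdErr h v x - sdErr h v y = -((f a₁ - f a₂) + (f b₁ - f b₂)) * (h ^ 2 / 24) := by
    rw [hx, hy]; ring
  calc |sdErr h v x - sdErr h v y| = |(f a₁ - f a₂) + (f b₁ - f b₂)| * h ^ 2 / 24 := by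
        rw [hdiff, abs_mul, abs_neg, abs_of_pos (by positivity : (0 : ℝ) < h ^ 2 / 24),
          mul_div_assoc]
    _ ≤ (|f a₁ - f a₂| + |f b₁ - f b₂|) * h ^ 2 / 24 := by gcongr; exact abs_add_le _ _
    _ ≤ (3 ^ α * M * |x - y| ^ α + 3 ^ α * M * |x - y| ^ α) * h ^ 2 / 24 := by gcongr
    _ = 3 ^ α / 12 * h ^ 2 * M * |x - y| ^ α := by ring

/-- For `0 < α < 1` there is a constant `C > 0`, depending only on `α`, such that for every
`C⁴` function `v : ℝ → ℝ` whose fourth derivative is `α`-Hölder with constant `M`, the error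
`E_h` of the central second difference quotient satisfies
`|E_h(x) - E_h(y)| ≤ C h² M |x - y|^α` whenever `h > 0` and `|x - y| ≥ h`. -/
theorem stmt14 (α : ℝ) (hα0 : 0 < α) (hα1 : α < 1) :
    ∃ C > 0, ∀ (v : ℝ → ℝ) (M : ℝ), ContDiff ℝ 4 v →
      (∀ s t : ℝ, |iteratedDeriv 4 v s - iteratedDeriv 4 v t| ≤ M * |s - t| ^ α) →
      ∀ h : ℝ, 0 < h → ∀ x y : ℝ, h ≤ |x - y| →
        |sdErr h v x - sdErr h v y| ≤ C * h ^ 2 * M * |x - y| ^ α :=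
  stmt14_general α hα0
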